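/- Let T be a left-invertible bounded operator on a Hilbert space, k ∈ ℤ₊, T' its Cauchy dual, and C_k = T'^{*k} T'^{k}. Then C_k is positive and invertible, and the restriction of T' to ran(T'^k) (which is T'-invariant and closed) is hyponormal if and only if C_k^{1/2} T' C_k^{-1/2} is hyponormal. -/

import Mathlib

/-!
Write `A = T'^k`, `C = A* A`, `R = C^{1/2}` and `S = R T' R⁻¹`. Since `R* R = A* A`, we have
`‖R y‖ = ‖A y‖` for all `y`, and `T'` commutes with `A`. Hence at `x = R y`,
`‖S x‖ = ‖R T' y‖ = ‖T' A y‖`, while `S* R = R⁻¹ T'* C` and `P T'* A = A C⁻¹ T'* C` with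
`R C⁻¹ = R⁻¹` give `‖S* x‖ = ‖P T'* A y‖`. As `R` is onto, `‖S* x‖ ≤ ‖S x‖` for all `x` (that is,
`S* S - S S* ≥ 0`) is exactly the hyponormality inequality on `ran A`. Invertibility of `C` comes
from `T* T' = 1`, which makes `A` left-invertible.
-/

open ContinuousLinearMap

/-- The Cauchy dual `T' = T (T*T)⁻¹` of a left-invertible operator. -/
noncomputable def cauchyDual {H : Type*} [NormedAddCommGroup H] [InnerProductSpace ℂ H]
    [CompleteSpace H] (T : H →L[ℂ] H) : H →L[ℂ] H :=
  T * Ring.inverse (adjoint T * T)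

/-- `C_k = T'^{*k} T'^k`. -/
noncomputable def Cop {H : Type*} [NormedAddCommGroup H] [InnerProductSpace ℂ H]
    [CompleteSpace H] (T : H →L[ℂ] H) (k : ℕ) : H →L[ℂ] H :=
  adjoint ((cauchyDual T) ^ k) * (cauchyDual T) ^ k

/-- The orthogonal projection onto `ran T'^k`, namely `T'^k C_k⁻¹ T'^{*k}`. -/
noncomputable def Pop {H : Type*} [NormedAddCommGroup H] [InnerProductSpace ℂ H]
    [CompleteSpace H] (T : H →L[ℂ] H) (k : ℕ) : H →L[ℂ] H :=
  (cauchyDual T) ^ k * Ring.inverse (Cop T k) * adjoint ((cauchyDual T) ^ k)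

namespace ContinuousLinearMap

variable {𝕜 E F : Type*} [RCLike 𝕜] [NormedAddCommGroup E] [InnerProductSpace 𝕜 E]
  [CompleteSpace E] [NormedAddCommGroup F] [InnerProductSpace 𝕜 F] [CompleteSpace F]

theorem norm_apply_eq_of_adjoint_comp_self_eq {A B : E →L[𝕜] F}
    (h : adjoint B ∘L B = adjoint A ∘L A) (x : E) : ‖B x‖ = ‖A x‖ := by
  rw [apply_norm_eq_sqrt_inner_adjoint_left, h, ← apply_norm_eq_sqrt_inner_adjoint_left]

theorem isUnit_adjoint_mul_self_of_mul_eq_one {L S : E →L[𝕜] E} (h : L * S = 1) :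
    IsUnit (adjoint S * S) := by
  refine isUnit_of_forall_le_norm_inner_map _ (c := (‖L‖₊ ^ 2 + 1)⁻¹) (by positivity)
    fun x => ?_
  have hLS : L (S x) = x := by rw [← mul_apply_eq_comp, h, one_apply_eq_self]
  have hx : ‖x‖ ≤ ‖L‖ * ‖S x‖ := by simpa only [hLS] using L.le_opNorm (S x)
  rw [mul_apply_eq_comp, adjoint_inner_left, inner_self_eq_norm_sq_to_K, norm_pow,
    RCLike.norm_ofReal, abs_norm, NNReal.coe_inv, NNReal.coe_add, NNReal.coe_pow, coe_nnnorm,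
    NNReal.coe_one, ← div_eq_mul_inv, div_le_iff₀ (by positivity)]
  nlinarith [norm_nonneg x, norm_nonneg L, norm_nonneg (S x)]

theorem isPositive_adjoint_mul_self_sub_mul_adjoint_iff (S : E →L[𝕜] E) :
    (adjoint S * S - S * adjoint S).IsPositive ↔ ∀ x, ‖adjoint S x‖ ≤ ‖S x‖ := by
  have hsa : IsSelfAdjoint (adjoint S * S - S * adjoint S) :=
    ((IsSelfAdjoint.star_mul_self S).sub (IsSelfAdjoint.mul_star_self S) :)
  have key : ∀ x, (adjoint S * S - S * adjoint S).reApplyInnerSelf x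
      = ‖S x‖ ^ 2 - ‖adjoint S x‖ ^ 2 := by
    intro x
    rw [apply_norm_sq_eq_inner_adjoint_left, apply_norm_sq_eq_inner_adjoint_left, adjoint_adjoint,
      reApplyInnerSelf_apply, sub_apply, inner_sub_left, map_sub]
    rfl
  simp only [isPositive_def', hsa, true_and, key, sub_nonneg]
  exact forall_congr' fun _ => pow_le_pow_iff_left₀ (norm_nonneg _) (norm_nonneg _) two_ne_zero

section SquareRoot

variable {H : Type*} [NormedAddCommGroup H] [InnerProductSpace ℂ H] [CompleteSpace H]
  {A X R : H →L[ℂ] H}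

theorem norm_apply_eq_of_mul_self_eq (hR : IsSelfAdjoint R) (hRA : R * R = adjoint A * A)
    (x : H) : ‖R x‖ = ‖A x‖ :=
  norm_apply_eq_of_adjoint_comp_self_eq (by rw [hR.adjoint_eq]; exact hRA) x

theorem norm_conj_apply_eq (hR : IsSelfAdjoint R) (hRu : IsUnit R) (hRA : R * R = adjoint A * A)
    (hAX : Commute A X) (x : H) : ‖(R * X * Ring.inverse R) (R x)‖ = ‖X (A x)‖ := by
  have hRX : (R * X * Ring.inverse R) (R x) = R (X x) := by
    rw [← mul_apply_eq_comp, Ring.inverse_mul_cancel_right _ _ hRu, mul_apply_eq_comp]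
  rw [hRX, norm_apply_eq_of_mul_self_eq hR hRA, ← mul_apply_eq_comp, hAX.eq, mul_apply_eq_comp]

theorem norm_adjoint_conj_apply_eq (hR : IsSelfAdjoint R) (hRu : IsUnit R)
    (hRA : R * R = adjoint A * A) (hAX : Commute A X) (x : H) :
    ‖adjoint (R * X * Ring.inverse R) (R x)‖
      = ‖(A * Ring.inverse (adjoint A * A) * adjoint A) (adjoint X (A x))‖ := by
  set C := adjoint A * A
  have hSR : adjoint (R * X * Ring.inverse R) * R = Ring.inverse R * adjoint X * C := by
    rw [← star_eq_adjoint, star_mul, star_mul, hR.ringInverse.star_eq, hR.star_eq,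
      star_eq_adjoint, ← hRA]
    simp only [mul_assoc]
  have hPXA : A * Ring.inverse C * adjoint A * adjoint X * A
      = A * (Ring.inverse C * adjoint X * C) := by
    have : adjoint A * adjoint X = adjoint X * adjoint A := by
      simpa only [star_eq_adjoint] using hAX.star_star.eq
    simp only [mul_assoc, C]
    rw [← mul_assoc (adjoint A), this, mul_assoc]
  have hRC : R * Ring.inverse C = Ring.inverse R := by
    rw [← hRA, Ring.mul_inverse_rev' (Commute.refl R), Ring.mul_inverse_cancel_left _ _ hRu]
  calc ‖adjoint (R * X * Ring.inverse R) (R x)‖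
      = ‖R ((Ring.inverse C * adjoint X * C) x)‖ := by
        rw [← mul_apply_eq_comp, hSR, ← hRC]; simp only [mul_assoc, mul_apply_eq_comp]
    _ = _ := by
        rw [norm_apply_eq_of_mul_self_eq hR hRA, ← mul_apply_eq_comp A, ← hPXA]
        simp only [mul_apply_eq_comp]

theorem forall_norm_le_iff_isPositive_conj (hR : IsSelfAdjoint R) (hRu : IsUnit R)
    (hRA : R * R = adjoint A * A) (hAX : Commute A X) :
    (∀ x, ‖(A * Ring.inverse (adjoint A * A) * adjoint A) (adjoint X (A x))‖ ≤ ‖X (A x)‖) ↔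
      (adjoint (R * X * Ring.inverse R) * (R * X * Ring.inverse R)
        - (R * X * Ring.inverse R) * adjoint (R * X * Ring.inverse R)).IsPositive := by
  rw [isPositive_adjoint_mul_self_sub_mul_adjoint_iff]
  conv_rhs => rw [(isUnit_iff_bijective.mp hRu).surjective.forall]
  simp only [norm_conj_apply_eq hR hRu hRA hAX, norm_adjoint_conj_apply_eq hR hRu hRA hAX]

end SquareRoot

end ContinuousLinearMap

theorem adjoint_mul_cauchyDual {H : Type*} [NormedAddCommGroup H] [InnerProductSpace ℂ H]
    [CompleteSpace H] {T : H →L[ℂ] H} (hT : IsUnit (adjoint T * T)) :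
    adjoint T * cauchyDual T = 1 := by
  rw [cauchyDual, ← mul_assoc, Ring.mul_inverse_cancel _ hT]

/-- For a left-invertible `T`, `C_k` is positive and invertible, and the restriction of `T'`
to `ran T'^k` is hyponormal iff `C_k^{1/2} T' C_k^{-1/2}` is hyponormal. -/
theorem stmt_17 {H : Type*} [NormedAddCommGroup H] [InnerProductSpace ℂ H] [CompleteSpace H]
    (T : H →L[ℂ] H) (hli : ∃ L : H →L[ℂ] H, L * T = 1) (k : ℕ) :
    (Cop T k).IsPositive ∧ IsUnit (Cop T k) ∧
    ((∀ x : H,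
        ‖(Pop T k) (adjoint (cauchyDual T) (((cauchyDual T) ^ k) x))‖
          ≤ ‖(cauchyDual T) (((cauchyDual T) ^ k) x)‖) ↔
      (adjoint (CFC.sqrt (Cop T k) * cauchyDual T * Ring.inverse (CFC.sqrt (Cop T k)))
          * (CFC.sqrt (Cop T k) * cauchyDual T * Ring.inverse (CFC.sqrt (Cop T k)))
        - (CFC.sqrt (Cop T k) * cauchyDual T * Ring.inverse (CFC.sqrt (Cop T k)))
          * adjoint (CFC.sqrt (Cop T k) * cauchyDual T
              * Ring.inverse (CFC.sqrt (Cop T k)))).IsPositive) := by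
  obtain ⟨L, hL⟩ := hli
  have hleft : adjoint T ^ k * cauchyDual T ^ k = 1 :=
    pow_mul_pow_eq_one k (adjoint_mul_cauchyDual (isUnit_adjoint_mul_self_of_mul_eq_one hL))
  have hunit : IsUnit (Cop T k) := isUnit_adjoint_mul_self_of_mul_eq_one hleft
  have hpos : (Cop T k).IsPositive := isPositive_adjoint_comp_self _
  have hnonneg : 0 ≤ Cop T k := (nonneg_iff_isPositive _).mpr hpos
  exact ⟨hpos, hunit, forall_norm_le_iff_isPositive_conj (.of_nonneg (CFC.sqrt_nonneg _))
    ((CFC.isUnit_sqrt_iff _ hnonneg).mpr hunit) (CFC.sqrt_mul_sqrt_self _ hnonneg)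
    ((Commute.refl _).pow_left k)⟩
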